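/- Let G be a group and x ∈ ℝG, and let X_x ∈ Mat₂(ℝG) be the matrix with zero diagonal, (X_x)₁₂ = x and (X_x)₂₁ = x*. Then X_x + ½‖X_x‖₁ I₂ is a sum of hermitian squares in Mat₂(ℝG), where ‖X_x‖₁ = ‖x‖₁ + ‖x*‖₁ = 2‖x‖₁. -/

import Mathlib

/-- The group-ring involution on `ℝG` determined by `g ↦ g⁻¹`. -/
noncomputable def gstar {G : Type*} [Group G] (x : MonoidAlgebra ℝ G) : MonoidAlgebra ℝ G :=
  MonoidAlgebra.ofCoeff (Finsupp.equivMapDomain (Equiv.inv G) x.coeff)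

section GroupRingStar
variable {G : Type*} [Group G]

lemma gstar_single (g : G) (a : ℝ) :
    gstar (MonoidAlgebra.single g a) = MonoidAlgebra.single g⁻¹ a := by
  simp [gstar, ← MonoidAlgebra.ofCoeff_single, Finsupp.equivMapDomain_single]

lemma gstar_add (x y : MonoidAlgebra ℝ G) : gstar (x + y) = gstar x + gstar y :=
  MonoidAlgebra.coeff_injective (map_add (Finsupp.domCongr (M := ℝ) (Equiv.inv G)) x.coeff y.coeff)

lemma gstar_zero : gstar (0 : MonoidAlgebra ℝ G) = 0 := by ext g; simp [gstar]

lemma gstar_gstar (x : MonoidAlgebra ℝ G) : gstar (gstar x) = x := by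
  ext g; simp [gstar]

lemma gstar_mul (x y : MonoidAlgebra ℝ G) : gstar (x * y) = gstar y * gstar x := by
  induction x using MonoidAlgebra.induction_linear with
  | zero => simp [gstar_zero]
  | add f g hf hg => rw [add_mul, gstar_add, hf, hg, gstar_add, mul_add]
  | single g a =>
    induction y using MonoidAlgebra.induction_linear with
    | zero => simp [gstar_zero]
    | add f g' hf hg => rw [mul_add, gstar_add, hf, hg, gstar_add, add_mul]
    | single h b =>
      rw [MonoidAlgebra.single_mul_single, gstar_single, gstar_single, gstar_single,
        MonoidAlgebra.single_mul_single, mul_inv_rev, mul_comm]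

/-- `ℝG` as a `*`-ring, with `star` induced by `g ↦ g⁻¹`. -/
noncomputable instance groupRingStar : StarRing (MonoidAlgebra ℝ G) where
  star := gstar
  star_involutive := gstar_gstar
  star_add := gstar_add
  star_mul := gstar_mul

lemma star_of (g : G) : star (MonoidAlgebra.of ℝ G g) = MonoidAlgebra.of ℝ G g⁻¹ := by
  show gstar _ = _
  simp [MonoidAlgebra.of_apply, gstar_single]

end GroupRingStar

/-- The `ℓ¹`-norm of an element of the group ring `ℝG`. -/
noncomputable def l1Norm {G : Type*} [Group G] (x : MonoidAlgebra ℝ G) : ℝ :=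
  ∑ g ∈ x.coeff.support, |x.coeff g|

/-- The `ℓ¹`-norm of a matrix over the group ring: the sum of the norms of entries. -/
noncomputable def matL1Norm {G : Type*} [Group G] {n : ℕ}
    (M : Matrix (Fin n) (Fin n) (MonoidAlgebra ℝ G)) : ℝ :=
  ∑ i, ∑ j, l1Norm (M i j)

/-- A matrix over `ℝG` is a sum of hermitian squares, i.e. lies in `Σ²Matₙ(ℝG)`. -/
def IsMatSOS {G : Type*} [Group G] {n : ℕ}
    (M : Matrix (Fin n) (Fin n) (MonoidAlgebra ℝ G)) : Prop :=
  ∃ (k : ℕ) (A : Fin k → Matrix (Fin n) (Fin n) (MonoidAlgebra ℝ G)),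
    M = ∑ i, star (A i) * A i

/-!
Each monomial `c g` of `x` contributes the hermitian square of the row `(√|c|, ±√|c| g)`,
namely `[[|c|, c g], [c g⁻¹, |c|]]`. Summing over the support of `x`, the off-diagonal
entries add up to `x` and `x*` and the diagonal ones to `‖x‖₁`, which is half of `‖X_x‖₁`
because the involution preserves the `ℓ¹`-norm.
-/

open MonoidAlgebra

lemma star_mul_self_rowMatrix {R : Type*} [Semiring R] [StarRing R] (a b : R) :
    star !![a, b; 0, 0] * !![a, b; 0, 0] = !![star a * a, star a * b; star b * a, star b * b] := by
  ext i j
  fin_cases i <;> fin_cases j <;> simp [Matrix.mul_apply, Matrix.star_apply, Fin.sum_univ_two]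

lemma exists_mul_self_eq_abs_and_mul_eq (c : ℝ) :
    ∃ s t : ℝ, s * s = |c| ∧ s * t = c ∧ t * t = |c| := by
  rcases le_or_gt 0 c with hc | hc
  · have hsq : √c * √c = c := Real.mul_self_sqrt hc
    exact ⟨√c, √c, by rw [abs_of_nonneg hc, hsq], hsq, by rw [abs_of_nonneg hc, hsq]⟩
  · have hsq : √(-c) * √(-c) = -c := Real.mul_self_sqrt (neg_nonneg.2 hc.le)
    refine ⟨√(-c), -√(-c), ?_, ?_, ?_⟩ <;> simp [abs_of_neg hc, hsq]

section GroupRing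
variable {G : Type*} [Group G]

lemma groupRing_star_single (g : G) (a : ℝ) : star (single g a) = single g⁻¹ a :=
  gstar_single g a

lemma groupRing_star_coeff (x : MonoidAlgebra ℝ G) (g : G) : (star x).coeff g = x.coeff g⁻¹ :=
  rfl

lemma l1Norm_zero : l1Norm (0 : MonoidAlgebra ℝ G) = 0 := by
  simp [l1Norm]

lemma l1Norm_star (x : MonoidAlgebra ℝ G) : l1Norm (star x) = l1Norm x :=
  Finset.sum_nbij' (·⁻¹) (·⁻¹) (by simp [groupRing_star_coeff]) (by simp [groupRing_star_coeff])
    (fun _ _ ↦ inv_inv _) (fun _ _ ↦ inv_inv _) (fun _ _ ↦ rfl)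

lemma matL1Norm_offDiag_star (x : MonoidAlgebra ℝ G) :
    matL1Norm !![0, x; star x, 0] = 2 * l1Norm x := by
  simp only [matL1Norm, Fin.sum_univ_two, Matrix.of_apply, Matrix.cons_val', Matrix.cons_val_zero,
    Matrix.cons_val_one, Matrix.empty_val', Matrix.cons_val_fin_one, l1Norm_zero, l1Norm_star]
  ring

lemma star_single_mul_single (g h : G) (a b : ℝ) :
    star (single g a) * single h b = single (g⁻¹ * h) (a * b) := by
  rw [groupRing_star_single, single_mul_single]

lemma IsMatSOS.finset_sum_star_mul_self {n : ℕ} {ι : Type*}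
    (s : Finset ι) (B : ι → Matrix (Fin n) (Fin n) (MonoidAlgebra ℝ G)) :
    IsMatSOS (∑ i ∈ s, star (B i) * B i) := by
  refine ⟨s.card, fun k ↦ B (s.equivFin.symm k), ?_⟩
  rw [← Finset.sum_attach s (fun i ↦ star (B i) * B i)]
  exact Fintype.sum_equiv s.equivFin _ _ (by simp)

noncomputable def monomialBlock (g : G) (c : ℝ) : Matrix (Fin 2) (Fin 2) (MonoidAlgebra ℝ G) :=
  !![single 1 |c|, single g c; single g⁻¹ c, single 1 |c|]

lemma monomialBlock_eq_star_mul_self (g : G) (c : ℝ) :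
    ∃ A : Matrix (Fin 2) (Fin 2) (MonoidAlgebra ℝ G), monomialBlock g c = star A * A := by
  obtain ⟨s, t, hss, hst, htt⟩ := exists_mul_self_eq_abs_and_mul_eq c
  refine ⟨!![single 1 s, single g t; 0, 0], ?_⟩
  rw [star_mul_self_rowMatrix, star_single_mul_single, star_single_mul_single,
    star_single_mul_single, star_single_mul_single, hss, hst, mul_comm t, hst, htt]
  simp [monomialBlock]

lemma offDiag_add_l1Norm_eq_sum_monomialBlock (x : MonoidAlgebra ℝ G) :
    !![0, x; star x, 0] + l1Norm x • (1 : Matrix (Fin 2) (Fin 2) (MonoidAlgebra ℝ G)) =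
      ∑ g ∈ x.coeff.support, monomialBlock g (x.coeff g) := by
  have hx : x = ∑ g ∈ x.coeff.support, single g (x.coeff g) := (sum_coeff_single x).symm
  have hstar : star x = ∑ g ∈ x.coeff.support, single g⁻¹ (x.coeff g) := by
    conv_lhs => rw [hx]
    simp only [star_sum, groupRing_star_single]
  have hnorm : single (1 : G) (l1Norm x) = ∑ g ∈ x.coeff.support, single 1 |x.coeff g| :=
    map_sum (singleAddHom (R := ℝ) (1 : G)) _ _
  ext i j
  fin_cases i <;> fin_cases j <;>
    simp [monomialBlock, Matrix.sum_apply, one_def, smul_single, ← hx, ← hstar, ← hnorm]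

end GroupRing

/-- for `x ∈ ℝG` and `X_x = [[0, x],[x*, 0]]`, the matrix
`X_x + ½‖X_x‖₁ I₂` is a sum of hermitian squares, where `‖X_x‖₁ = 2‖x‖₁`. -/
theorem statement4 {G : Type*} [Group G] (x : MonoidAlgebra ℝ G) :
    matL1Norm !![0, x; star x, 0] = 2 * l1Norm x ∧
    IsMatSOS (!![0, x; star x, 0] +
      ((1 / 2 : ℝ) * matL1Norm !![0, x; star x, 0]) •
        (1 : Matrix (Fin 2) (Fin 2) (MonoidAlgebra ℝ G))) := by
  refine ⟨matL1Norm_offDiag_star x, ?_⟩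
  rw [matL1Norm_offDiag_star, one_div, inv_mul_cancel_left₀ two_ne_zero,
    offDiag_add_l1Norm_eq_sum_monomialBlock]
  choose A hA using fun g ↦ monomialBlock_eq_star_mul_self g (x.coeff g)
  simp only [hA]
  exact IsMatSOS.finset_sum_star_mul_self _ A
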